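/- If x* maximizes the linear function ⟪c, ·⟫ over the convex set P = {x ∈ ℝⁿ : ∀ j, ⟪a_j, x⟫ ≤ b_j} (finitely many constraints), then c lies in the convex cone generated by the normal vectors a_j of the constraints that are active at x*, i.e., those j with ⟪a_j, x*⟫ = b_j. -/

import Mathlib

/-!
If `⟪a j, d⟫ ≥ 0` for every constraint active at `x*`, then `x* - t • d` is still feasible for
small `t > 0` (the inactive constraints have slack), so maximality forces `⟪c, d⟫ ≥ 0`. Farkas'
lemma turns this into `c ∈ cone {a j | j active}`. Farkas' lemma is proved by induction on the
number of generators: if `c` fails the condition for the generators other than `ψ`, witnessed by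
`d`, then `ψ d < 0`, and restricting all functionals to `ker ψ` along `d` (Fourier–Motzkin
elimination) yields an instance with one generator fewer.
-/

open RealInnerProductSpace PointedCone Filter Topology

namespace Module.Dual

section Field

variable {𝕜 V : Type*} [Field 𝕜] [AddCommGroup V] [Module 𝕜 V]

def eliminate (ψ : Module.Dual 𝕜 V) (d : V) (φ : Module.Dual 𝕜 V) : Module.Dual 𝕜 V :=
  φ - (φ d / ψ d) • ψ

lemma eliminate_apply (ψ : Module.Dual 𝕜 V) (d : V) (φ : Module.Dual 𝕜 V) (v : V) :
    eliminate ψ d φ v = φ (v - (ψ v / ψ d) • d) := by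
  simp only [eliminate, LinearMap.sub_apply, LinearMap.smul_apply, map_sub, map_smul, smul_eq_mul]
  ring

lemma eliminate_self {ψ : Module.Dual 𝕜 V} {d : V} (hψ : ψ d ≠ 0) : eliminate ψ d ψ = 0 := by
  simp [eliminate, hψ]

lemma eliminate_nonneg_of_forall_nonneg [Preorder 𝕜] {ι : Type*} {ψ c : Module.Dual 𝕜 V}
    {f : ι → Module.Dual 𝕜 V} {s : Set ι} {d : V} (hψ : ψ d ≠ 0)
    (h : ∀ v, 0 ≤ ψ v → (∀ i ∈ s, 0 ≤ f i v) → 0 ≤ c v) {v : V}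
    (hv : ∀ i ∈ s, 0 ≤ eliminate ψ d (f i) v) : 0 ≤ eliminate ψ d c v := by
  simp only [eliminate_apply] at hv ⊢
  refine h _ ?_ hv
  rw [← eliminate_apply, eliminate_self hψ, LinearMap.zero_apply]

end Field

variable {𝕜 V : Type*} [Field 𝕜] [LinearOrder 𝕜] [IsStrictOrderedRing 𝕜]
  [AddCommGroup V] [Module 𝕜 V]

lemma eq_zero_of_forall_nonneg {c : Module.Dual 𝕜 V} (h : ∀ v, 0 ≤ c v) : c = 0 :=
  LinearMap.ext fun v => le_antisymm (by simpa using h (-v)) (h v)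

lemma mem_hull_insert_of_eliminate_mem_hull {ι : Type*} {ψ c : Module.Dual 𝕜 V}
    {f : ι → Module.Dual 𝕜 V} {s : Set ι} {d : V} (hψ : ψ d < 0) (hf : ∀ i ∈ s, 0 ≤ f i d)
    (hc : c d ≤ 0) (h : eliminate ψ d c ∈ hull 𝕜 ((eliminate ψ d ∘ f) '' s)) :
    c ∈ hull 𝕜 (insert ψ (f '' s)) := by
  set C := hull 𝕜 (insert ψ (f '' s))
  have hψC : ψ ∈ C := subset_hull (Set.mem_insert ψ _)
  have hle : hull 𝕜 ((eliminate ψ d ∘ f) '' s) ≤ C := by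
    refine Submodule.span_le.2 ?_
    rintro _ ⟨i, hi, rfl⟩
    have hfi : eliminate ψ d (f i) = f i + (-(f i d / ψ d)) • ψ := by
      rw [eliminate]; module
    rw [Function.comp_apply, SetLike.mem_coe, hfi]
    exact add_mem (subset_hull (Set.mem_insert_of_mem ψ (Set.mem_image_of_mem f hi)))
      (C.smul_mem (neg_nonneg.2 (div_nonpos_of_nonneg_of_nonpos (hf i hi) hψ.le)) hψC)
  have hc_eq : c = eliminate ψ d c + (c d / ψ d) • ψ := by simp [eliminate]
  rw [hc_eq]
  exact add_mem (hle h) (C.smul_mem (div_nonneg_of_nonpos hc hψ.le) hψC)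

theorem mem_hull_image_of_forall_nonneg {ι : Type*} {s : Set ι} (hs : s.Finite)
    {f : ι → Module.Dual 𝕜 V} {c : Module.Dual 𝕜 V}
    (h : ∀ v, (∀ i ∈ s, 0 ≤ f i v) → 0 ≤ c v) : c ∈ hull 𝕜 (f '' s) := by
  induction s, hs using Set.Finite.induction_on generalizing f c with
  | empty =>
    rw [eq_zero_of_forall_nonneg fun v => h v (by simp)]
    exact zero_mem _
  | @insert i s _ _ ih =>
    simp only [Set.forall_mem_insert] at h
    rw [Set.image_insert_eq]
    by_cases hs : ∀ v, (∀ j ∈ s, 0 ≤ f j v) → 0 ≤ c v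
    · exact Submodule.span_mono (Set.subset_insert _ _) (ih hs)
    push Not at hs
    obtain ⟨d, hsd, hcd⟩ := hs
    have hid : f i d < 0 := by
      by_contra! hid
      exact hcd.not_ge (h d ⟨hid, hsd⟩)
    exact mem_hull_insert_of_eliminate_mem_hull hid hsd hcd.le
      (ih fun v => eliminate_nonneg_of_forall_nonneg hid.ne fun w hψ hs => h w ⟨hψ, hs⟩)

end Module.Dual

lemma PointedCone.exists_nonneg_coeffs_of_mem_hull_image {R M ι : Type*} [Semiring R]
    [PartialOrder R] [IsOrderedRing R] [AddCommMonoid M] [Module R M] [Fintype ι]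
    {v : ι → M} {s : Set ι} {x : M} (hx : x ∈ hull R (v '' s)) :
    ∃ lam : ι → R, (∀ i, 0 ≤ lam i) ∧ (∀ i, lam i ≠ 0 → i ∈ s) ∧ x = ∑ i, lam i • v i := by
  obtain ⟨l, hl, rfl⟩ := (Finsupp.mem_span_image_iff_linearCombination _).1 hx
  refine ⟨fun i => l i, fun i => (l i).2,
    fun i hi => hl (Finsupp.mem_support_iff.2 fun h => hi (congrArg Subtype.val h)), ?_⟩
  rw [Finsupp.linearCombination_apply, Finsupp.sum_fintype _ _ (by simp)]
  simp [Nonneg.coe_smul]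

section Polyhedron

variable {E ι : Type*} [NormedAddCommGroup E] [InnerProductSpace ℝ E] [Finite ι]
  {a : ι → E} {b : ι → ℝ} {x d : E}

lemma eventually_feasible_sub_smul (hx : ∀ j, ⟪a j, x⟫ ≤ b j)
    (hd : ∀ j, ⟪a j, x⟫ = b j → 0 ≤ ⟪a j, d⟫) :
    ∀ᶠ t in 𝓝[>] (0 : ℝ), ∀ j, ⟪a j, x - t • d⟫ ≤ b j := by
  refine eventually_all.2 fun j => ?_
  rcases (hx j).eq_or_lt with hj | hj
  · filter_upwards [self_mem_nhdsWithin] with t (ht : 0 < t)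
    rw [inner_sub_right, real_inner_smul_right, hj]
    exact sub_le_self _ (mul_nonneg ht.le (hd j hj))
  · have hcont : Continuous fun t : ℝ => ⟪a j, x - t • d⟫ := by fun_prop
    refine nhdsWithin_le_nhds ?_
    filter_upwards [hcont.continuousAt.eventually_lt continuousAt_const (by simpa using hj)]
      with t ht using ht.le

lemma inner_nonneg_of_forall_active_nonneg {c : E} (hx : ∀ j, ⟪a j, x⟫ ≤ b j)
    (hmax : ∀ y, (∀ j, ⟪a j, y⟫ ≤ b j) → ⟪c, y⟫ ≤ ⟪c, x⟫)
    (hd : ∀ j, ⟪a j, x⟫ = b j → 0 ≤ ⟪a j, d⟫) : 0 ≤ ⟪c, d⟫ := by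
  obtain ⟨t, hfeas, ht⟩ :=
    ((eventually_feasible_sub_smul hx hd).and self_mem_nhdsWithin).exists
  have hle := hmax _ hfeas
  rw [inner_sub_right, real_inner_smul_right] at hle
  exact (mul_nonneg_iff_of_pos_left (show (0 : ℝ) < t from ht)).1 (by linarith)

end Polyhedron

theorem gradient_in_normal_cone_of_active {n m : ℕ}
    (a : Fin m → EuclideanSpace ℝ (Fin n)) (b : Fin m → ℝ)
    (c : EuclideanSpace ℝ (Fin n))
    (xstar : EuclideanSpace ℝ (Fin n))
    (hxP : ∀ j, ⟪a j, xstar⟫ ≤ b j)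
    (hxmax : ∀ y : EuclideanSpace ℝ (Fin n), (∀ j, ⟪a j, y⟫ ≤ b j) →
      ⟪c, y⟫ ≤ ⟪c, xstar⟫) :
    ∃ lam : Fin m → ℝ, (∀ j, 0 ≤ lam j) ∧
      (∀ j, lam j ≠ 0 → ⟪a j, xstar⟫ = b j) ∧
      c = ∑ j, lam j • a j := by
  have hcone : innerₗ _ c ∈ hull ℝ ((innerₗ _ ∘ a) '' {j | ⟪a j, xstar⟫ = b j}) :=
    Module.Dual.mem_hull_image_of_forall_nonneg (Set.toFinite _) fun _ hd =>
      inner_nonneg_of_forall_active_nonneg hxP hxmax hd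
  obtain ⟨lam, hlam, hactive, hc⟩ := exists_nonneg_coeffs_of_mem_hull_image hcone
  refine ⟨lam, hlam, hactive, ext_inner_right ℝ fun v => ?_⟩
  simpa [sum_inner, real_inner_smul_left] using LinearMap.congr_fun hc v
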